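/- There exists x₀ > 0 such that for all 0 < x < x₀, the sum Σ_{n≥1} λ(n)/(e^{nπx}+1) is negative; moreover this sum tends to −∞ as x ↓ 0. -/

import Mathlib

/-!
With `q = e^{-t}` one has `1 / (e^t + 1) = q / (1 - q) - 2 q² / (1 - q²)`, so the series is
`L(e^{-πx}) - 2 L(e^{-2πx})` for the Lambert series `L(q) = ∑ λ(n) qⁿ / (1 - qⁿ)`. Since
`∑_{d ∣ m} λ(d)` is the indicator of the squares, `L(q) = ∑_{n ≥ 1} q^{n²}`, and comparison with the
Gaussian integral gives `√(π/y)/2 - 1 ≤ L(e^{-y}) ≤ √(π/y)/2`. Hence the series is at most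
`(1/2 - 1/√2) / √x + 2`, which tends to `-∞` as `x → 0⁺`.
-/

open Real Filter

/-- The Liouville function `λ(n) = (-1)^Ω(n)`. -/
def liouville (n : ℕ) : ℤ := (-1) ^ n.primeFactorsList.length

open Topology Set
open scoped ArithmeticFunction.zeta

theorem Nat.isSquare_mul_iff_of_coprime {m n : ℕ} (h : m.Coprime n) :
    IsSquare (m * n) ↔ IsSquare m ∧ IsSquare n := by
  refine ⟨fun ⟨r, hr⟩ => ?_, fun ⟨hm, hn⟩ => hm.mul hn⟩
  rw [← sq] at hr
  obtain ⟨a, ha⟩ := exists_eq_pow_of_mul_eq_pow (Nat.isUnit_iff.mpr h) hr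
  obtain ⟨b, hb⟩ :=
    exists_eq_pow_of_mul_eq_pow (Nat.isUnit_iff.mpr h.symm) ((mul_comm n m).trans hr)
  exact ⟨⟨a, ha.trans (sq a)⟩, ⟨b, hb.trans (sq b)⟩⟩

theorem Nat.Prime.isSquare_pow_iff {p k : ℕ} (hp : p.Prime) : IsSquare (p ^ k) ↔ Even k := by
  refine ⟨fun ⟨r, hr⟩ => ?_, fun hk => hk.isSquare_pow p⟩
  obtain ⟨i, -, rfl⟩ := (Nat.dvd_prime_pow hp).mp (Dvd.intro r hr.symm)
  rw [← pow_add] at hr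
  rw [Nat.pow_right_injective hp.two_le hr]
  exact ⟨i, rfl⟩

namespace ArithmeticFunction

def squareIndicator : ArithmeticFunction ℤ :=
  ⟨fun n => if n ≠ 0 ∧ IsSquare n then 1 else 0, by simp⟩

theorem squareIndicator_apply (n : ℕ) :
    squareIndicator n = if n ≠ 0 ∧ IsSquare n then 1 else 0 := rfl

theorem isMultiplicative_squareIndicator : squareIndicator.IsMultiplicative := by
  refine ⟨by simp [squareIndicator_apply], fun {m n} hmn => ?_⟩
  simp only [squareIndicator_apply, Nat.isSquare_mul_iff_of_coprime hmn, mul_ne_zero_iff]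
  split_ifs <;> tauto

theorem liouville_mul_zeta : liouville * (ζ : ArithmeticFunction ℤ) = squareIndicator := by
  refine (IsMultiplicative.eq_iff_eq_on_prime_powers _
    (isMultiplicative_liouville.mul isMultiplicative_zeta.natCast) _
    isMultiplicative_squareIndicator).mpr fun p k hp => ?_
  rw [coe_mul_zeta_apply, Nat.sum_divisors_prime_pow hp, squareIndicator_apply]
  have hpow (i : ℕ) : liouville (p ^ i) = (-1) ^ i := by
    rw [liouville_apply (pow_ne_zero _ hp.ne_zero), cardFactors_apply_prime_pow hp]
  by_cases hk : Even k <;> simp [hpow, neg_one_geom_sum, hp.isSquare_pow_iff, hp.ne_zero, hk,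
    Nat.even_add_one]

end ArithmeticFunction

theorem liouville_eq_arithmeticFunction_liouville {n : ℕ} (hn : n ≠ 0) :
    liouville n = ArithmeticFunction.liouville n := by
  rw [ArithmeticFunction.liouville_apply hn, ArithmeticFunction.cardFactors_apply, liouville]

theorem sum_divisors_liouville {n : ℕ} (hn : n ≠ 0) :
    ∑ d ∈ n.divisors, liouville d = if IsSquare n then 1 else 0 := by
  have h := congr($ArithmeticFunction.liouville_mul_zeta n)
  rw [ArithmeticFunction.coe_mul_zeta_apply, ArithmeticFunction.squareIndicator_apply] at h
  rw [Finset.sum_congr rfl fun d hd =>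
    liouville_eq_arithmeticFunction_liouville (Nat.pos_of_mem_divisors hd).ne', h]
  simp [hn]

theorem hasSum_lambertSeries {𝕜 : Type*} [NontriviallyNormedField 𝕜] [CompleteSpace 𝕜]
    {f : ℕ → 𝕜} {C : ℝ} (hf : ∀ n, ‖f n‖ ≤ C) {q : 𝕜} (hq : ‖q‖ < 1) :
    HasSum (fun n : ℕ+ => f n * (q ^ (n : ℕ) / (1 - q ^ (n : ℕ))))
      (∑' m : ℕ+, (∑ d ∈ (m : ℕ).divisors, f d) * q ^ (m : ℕ)) := by
  set g : ℕ+ × ℕ+ → 𝕜 := fun c => f c.1 * q ^ (c.1 * c.2 : ℕ)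
  have hg : Summable g := by
    refine .of_norm_bounded ((summable_prod_mul_pow 0 (r := ‖q‖) (by simpa using hq)).mul_left C)
      fun c => ?_
    simp only [g, norm_mul, norm_pow, pow_zero, one_mul]
    exact mul_le_mul_of_nonneg_right (hf _) (by positivity)
  have hrow (a : ℕ+) :
      HasSum (fun b : ℕ+ => g (a, b)) (f a * (q ^ (a : ℕ) / (1 - q ^ (a : ℕ)))) := by
    have hqa : ‖q ^ (a : ℕ)‖ < 1 := by
      rw [norm_pow]; exact pow_lt_one₀ (norm_nonneg _) hq a.ne_zero
    have h := (hasSum_geometric_of_norm_lt_one hqa).mul_left (f a * q ^ (a : ℕ))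
    rw [mul_assoc, ← div_eq_mul_inv] at h
    have e (b : ℕ) : f a * q ^ ((a : ℕ) * (b + 1)) = f a * q ^ (a : ℕ) * (q ^ (a : ℕ)) ^ b := by
      ring
    exact hasSum_pnat_iff_hasSum_succ (f := fun b => f a * q ^ ((a : ℕ) * b)) |>.mpr
      (by simpa only [e] using h)
  have hfiber (m : ℕ+) : HasSum (fun x : (m : ℕ).divisorsAntidiagonal =>
      g (sigmaAntidiagonalEquivProd ⟨m, x⟩)) ((∑ d ∈ (m : ℕ).divisors, f d) * q ^ (m : ℕ)) := by
    convert hasSum_fintype _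
    calc (∑ d ∈ (m : ℕ).divisors, f d) * q ^ (m : ℕ)
        = ∑ x ∈ (m : ℕ).divisorsAntidiagonal, f x.1 * q ^ (x.1 * x.2) := by
          rw [← Nat.sum_divisorsAntidiagonal (fun a _ => f a), Finset.sum_mul]
          refine Finset.sum_congr rfl fun x hx => ?_
          rw [(Nat.mem_divisorsAntidiagonal.mp hx).1]
      _ = _ := (Finset.sum_coe_sort _ _).symm
  rw [((sigmaAntidiagonalEquivProd.hasSum_iff.mpr hg.hasSum).sigma hfiber).tsum_eq]
  exact hg.hasSum.prod_fiberwise hrow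

theorem tsum_pnat_ite_isSquare {α : Type*} [AddCommMonoid α] [TopologicalSpace α] (f : ℕ → α) :
    ∑' m : ℕ+, (if IsSquare (m : ℕ) then f m else 0) = ∑' n : ℕ, f ((n + 1) ^ 2) := by
  have hinj : Function.Injective fun n : ℕ => n.succPNat ^ 2 := fun a b h => by
    simpa using congrArg (fun m : ℕ+ => (m : ℕ)) h
  rw [← hinj.tsum_eq]
  · exact tsum_congr fun n => by simp [IsSquare.sq]
  · intro m hm
    obtain ⟨r, hr⟩ : IsSquare (m : ℕ) := by_contra fun h => hm (if_neg h)
    have hr0 : r ≠ 0 := by rintro rfl; exact m.ne_zero hr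
    refine ⟨r - 1, PNat.coe_injective ?_⟩
    simp [hr, Nat.sub_add_cancel (Nat.one_le_iff_ne_zero.mpr hr0), sq]

noncomputable def thetaSum (q : ℝ) : ℝ := ∑' n : ℕ, q ^ ((n + 1) ^ 2)

theorem hasSum_liouville_lambertSeries {q : ℝ} (hq : |q| < 1) :
    HasSum (fun n : ℕ => (liouville (n + 1) : ℝ) * (q ^ (n + 1) / (1 - q ^ (n + 1))))
      (thetaSum q) := by
  have h := hasSum_lambertSeries (f := fun n => (liouville n : ℝ)) (C := 1)
    (fun n => by simp [liouville]) (by rwa [Real.norm_eq_abs])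
  have hsum : ∑' m : ℕ+, (∑ d ∈ (m : ℕ).divisors, (liouville d : ℝ)) * q ^ (m : ℕ) =
      thetaSum q := by
    rw [thetaSum, ← tsum_pnat_ite_isSquare]
    refine tsum_congr fun m => ?_
    rw [← Int.cast_sum, sum_divisors_liouville m.ne_zero]
    split_ifs <;> simp
  rw [hsum] at h
  exact hasSum_pnat_iff_hasSum_succ
    (f := fun n => (liouville n : ℝ) * (q ^ n / (1 - q ^ n))) |>.mp h

theorem thetaSum_exp_neg (y : ℝ) :
    thetaSum (rexp (-y)) = ∑' n : ℕ, rexp (-y * ((n + 1 : ℕ) : ℝ) ^ 2) := by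
  refine tsum_congr fun n => ?_
  rw [← exp_nat_mul]
  push_cast
  ring_nf

theorem antitoneOn_exp_neg_mul_sq {y : ℝ} (hy : 0 ≤ y) :
    AntitoneOn (fun t : ℝ => rexp (-y * t ^ 2)) (Ici 0) := fun a ha b _ hab => by
  simp only [neg_mul, exp_le_exp, neg_le_neg_iff]
  exact mul_le_mul_of_nonneg_left (pow_le_pow_left₀ ha hab 2) hy

theorem thetaSum_exp_neg_le {y : ℝ} (hy : 0 < y) : thetaSum (rexp (-y)) ≤ √(π / y) / 2 := by
  rw [thetaSum_exp_neg, ← integral_gaussian_Ioi]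
  exact (antitoneOn_exp_neg_mul_sq hy.le).tsum_add_one_le_integral
    (integrable_exp_neg_mul_sq hy).integrableOn fun _ _ => (exp_pos _).le

theorem le_thetaSum_exp_neg {y : ℝ} (hy : 0 < y) : √(π / y) / 2 - 1 ≤ thetaSum (rexp (-y)) := by
  have anti := antitoneOn_exp_neg_mul_sq hy.le
  have hsum := anti.summable_of_integrableOn_Ioi_zero (integrable_exp_neg_mul_sq hy).integrableOn
    fun _ _ => (exp_pos _).le
  have h := anti.integral_le_tsum hsum fun _ _ => (exp_pos _).le
  rw [integral_gaussian_Ioi, hsum.tsum_eq_zero_add, Nat.cast_zero, zero_pow two_ne_zero,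
    mul_zero, exp_zero] at h
  rw [thetaSum_exp_neg]
  linarith

theorem one_div_inv_add_one_eq {K : Type*} [Field K] {q : K} (h₀ : q ≠ 0) (h₂ : 1 - q ^ 2 ≠ 0) :
    1 / (q⁻¹ + 1) = q / (1 - q) - 2 * (q ^ 2 / (1 - q ^ 2)) := by
  have h₁ : 1 - q ≠ 0 := fun h => h₂ (by linear_combination (1 + q) * h)
  have h₃ : 1 + q ≠ 0 := fun h => h₂ (by linear_combination (1 - q) * h)
  field_simp
  ring

theorem hasSum_liouville_div_exp_add_one {y : ℝ} (hy : 0 < y) :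
    HasSum (fun n : ℕ => (liouville (n + 1) : ℝ) / (rexp ((n + 1) * y) + 1))
      (thetaSum (rexp (-y)) - 2 * thetaSum (rexp (-(2 * y)))) := by
  have hq {c : ℝ} (hc : 0 < c) : |rexp (-c)| < 1 := by
    rw [abs_of_pos (exp_pos _), exp_lt_one_iff]; linarith
  refine ((hasSum_liouville_lambertSeries (hq hy)).sub
    ((hasSum_liouville_lambertSeries (hq (mul_pos two_pos hy))).mul_left 2)).congr_fun fun n => ?_
  have hpow (c : ℝ) : rexp (-c) ^ (n + 1) = rexp (-((n + 1) * c)) := by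
    rw [← exp_nat_mul]; push_cast; ring_nf
  have hQ : rexp ((n + 1) * y) = (rexp (-((n + 1) * y)))⁻¹ := by rw [exp_neg, inv_inv]
  set Q := rexp (-((n + 1) * y))
  have hQ2 : rexp (-((n + 1) * (2 * y))) = Q ^ 2 := by rw [← exp_nat_mul]; push_cast; ring_nf
  have hQ1 : Q < 1 := exp_lt_one_iff.mpr (neg_neg_of_pos (by positivity))
  rw [hpow, hpow, hQ2, div_eq_mul_one_div, hQ,
    one_div_inv_add_one_eq (exp_pos _).ne' (by nlinarith [exp_pos (-((n + 1) * y))])]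
  ring

theorem tsum_liouville_div_exp_add_one_le {x : ℝ} (hx : 0 < x) :
    ∑' n : ℕ, (liouville (n + 1) : ℝ) / (rexp ((n + 1) * π * x) + 1)
      ≤ (1 / 2 - √2⁻¹) * √x⁻¹ + 2 := by
  have hy : 0 < π * x := by positivity
  simp_rw [mul_assoc _ π x]
  rw [(hasSum_liouville_div_exp_add_one hy).tsum_eq]
  have h₁ := thetaSum_exp_neg_le hy
  have h₂ := le_thetaSum_exp_neg (mul_pos two_pos hy)
  rw [show π / (π * x) = x⁻¹ by field_simp] at h₁
  rw [show π / (2 * (π * x)) = 2⁻¹ * x⁻¹ by field_simp, sqrt_mul (by norm_num)] at h₂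
  nlinarith

theorem tendsto_mul_sqrt_inv_add_nhdsGT_zero_atBot {c : ℝ} (hc : c < 0) (d : ℝ) :
    Tendsto (fun x : ℝ => c * √x⁻¹ + d) (𝓝[>] 0) atBot :=
  tendsto_atBot_add_const_right _ d
    ((tendsto_sqrt_atTop.comp tendsto_inv_nhdsGT_zero).const_mul_atTop_of_neg hc)

theorem liouville_weighted_mean_negative :
    (∃ x₀ : ℝ, 0 < x₀ ∧ ∀ x : ℝ, 0 < x → x < x₀ →
      (∑' n : ℕ, (liouville (n + 1) : ℝ) / (Real.exp (((n : ℝ) + 1) * π * x) + 1)) < 0) ∧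
    Tendsto (fun x : ℝ => ∑' n : ℕ,
        (liouville (n + 1) : ℝ) / (Real.exp (((n : ℝ) + 1) * π * x) + 1))
      (nhdsWithin 0 (Set.Ioi 0)) atBot := by
  have hc : 1 / 2 - √2⁻¹ < 0 := sub_neg.mpr (lt_sqrt_of_sq_lt (by norm_num))
  have hlim : Tendsto (fun x : ℝ => ∑' n : ℕ,
      (liouville (n + 1) : ℝ) / (Real.exp (((n : ℝ) + 1) * π * x) + 1)) (𝓝[>] 0) atBot :=
    tendsto_atBot_mono' _
      (eventually_mem_nhdsWithin.mono fun _ => tsum_liouville_div_exp_add_one_le)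
      (tendsto_mul_sqrt_inv_add_nhdsGT_zero_atBot hc 2)
  obtain ⟨x₀, hx₀, hneg⟩ :=
    mem_nhdsGT_iff_exists_Ioo_subset.mp (hlim.eventually (eventually_lt_atBot 0))
  exact ⟨⟨x₀, hx₀, fun x h₀ h₁ => hneg ⟨h₀, h₁⟩⟩, hlim⟩
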